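/- The function f₀(u,v) = (1 + 2√3 v)(1 + 3u − √3 v)(1 − 3u − √3 v) has exactly one critical point in the open triangle T₀ with vertices (−1/2, −√3/6), (1/2, −√3/6), (0, √3/3), namely the origin (0,0). -/

import Mathlib

open Real

/-- Partial derivative in the first variable. -/
noncomputable def pdx (f : ℝ × ℝ → ℝ) (p : ℝ × ℝ) : ℝ :=
  deriv (fun x => f (x, p.2)) p.1

/-- Partial derivative in the second variable. -/
noncomputable def pdy (f : ℝ × ℝ → ℝ) (p : ℝ × ℝ) : ℝ :=
  deriv (fun y => f (p.1, y)) p.2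

/-- The torsion function of the equilateral triangle `T₀`. -/
noncomputable def f0 (p : ℝ × ℝ) : ℝ :=
  (1 + 2 * Real.sqrt 3 * p.2) * (1 + 3 * p.1 - Real.sqrt 3 * p.2)
    * (1 - 3 * p.1 - Real.sqrt 3 * p.2)

/-- The open equilateral triangle `T₀` with vertices `(−1/2, −√3/6)`,
`(1/2, −√3/6)`, `(0, √3/3)`. -/
noncomputable def T0 : Set (ℝ × ℝ) :=
  {p | 0 < 1 + 2 * Real.sqrt 3 * p.2 ∧ 0 < 1 + 3 * p.1 - Real.sqrt 3 * p.2 ∧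
       0 < 1 - 3 * p.1 - Real.sqrt 3 * p.2}

/-! Both partial derivatives factor. On `T₀` the factor `1 + 2√3 v` of `∂ₓf₀` is positive,
forcing `u = 0`, and then `∂ᵧf₀ = -18 v (1 - √3 v)` with `1 - √3 v > 0` (half the sum of the
other two defining forms of `T₀`), forcing `v = 0`. -/

lemma pdx_f0 (u v : ℝ) : pdx f0 (u, v) = -18 * u * (1 + 2 * √3 * v) := by
  have hB := (((hasDerivAt_id u).const_mul 3).const_add 1).sub_const (√3 * v)
  have hC := (((hasDerivAt_id u).const_mul 3).const_sub 1).sub_const (√3 * v)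
  have h : HasDerivAt (fun x => f0 (x, v)) _ u := (hB.const_mul (1 + 2 * √3 * v)).mul hC
  rw [pdx, h.deriv]
  simp only [id]
  ring

lemma pdy_f0 (u v : ℝ) : pdy f0 (u, v) = -18 * (v * (1 - √3 * v) + √3 * u ^ 2) := by
  have hA := ((hasDerivAt_id v).const_mul (2 * √3)).const_add 1
  have hB := ((hasDerivAt_id v).const_mul √3).const_sub (1 + 3 * u)
  have hC := ((hasDerivAt_id v).const_mul √3).const_sub (1 - 3 * u)
  have h : HasDerivAt (fun y => f0 (u, y)) _ v := (hA.mul hB).mul hC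
  rw [pdy, h.deriv]
  simp only [id, Pi.mul_apply]
  linear_combination (6 * √3 * v ^ 2 - 6 * v) * Real.sq_sqrt (show (0 : ℝ) ≤ 3 by norm_num)

/-- `f₀` has exactly one critical point in the open triangle `T₀`,
namely the origin. -/
theorem f0_unique_critical_point :
    ∀ p ∈ T0, (pdx f0 p = 0 ∧ pdy f0 p = 0) ↔ p = ((0 : ℝ), (0 : ℝ)) := by
  rintro ⟨u, v⟩ ⟨hA, hB, hC⟩
  rw [pdx_f0, pdy_f0, Prod.mk.injEq]
  constructor
  · rintro ⟨hx, hy⟩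
    have hu : u = 0 := by simpa [hA.ne'] using hx
    have hv : v * (1 - √3 * v) = 0 := by simpa [hu] using hy
    have hpos : 1 - √3 * v ≠ 0 := by linarith
    exact ⟨hu, (mul_eq_zero.mp hv).resolve_right hpos⟩
  · rintro ⟨rfl, rfl⟩
    constructor <;> ring
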